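/- Let the underlying graph be a path on agents 1,…,n. If in a sequence of swaps two distinct objects w and y are each only moved to the right (every swap involving w, and every swap involving y, transfers that object to a higher-indexed agent), then w and y are never swapped with each other, and their relative order is preserved: in every assignment of the sequence, the one of w,y that was initially held by the lower-indexed agent is still held by a lower-indexed agent than the other. -/

import Mathlib

/-!
On a path every swap moves an object by exactly one position. When `w` passes from agent
`i` to agent `i + 1`, the object `y` held further right cannot sit at `i + 1`, since it would
then move left; so `y` stays strictly to the right of `w`, and "`w` is held left of `y`" is
invariant along the sequence. A swap exchanging `w` and `y` would move one of them left.
-/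

/-- The setting of the swap-dynamics model with `N` agents `0, 1, ..., N-1` and
`N` objects, object `j` being the object initially held by agent `j`.
Each agent has a preference list (a duplicate-free list of objects, most preferred
first), and the agents form a social network given by a simple graph. -/
structure SwapModel (N : ℕ) where
  /-- the preference list of each agent -/
  pref : Fin N → List (Fin N)
  nodup : ∀ i, (pref i).Nodup
  /-- the underlying social network -/
  G : SimpleGraph (Fin N)

namespace SwapModel

variable {N : ℕ}

/-- Agent `i` prefers object `u` to object `v`: both appear on her preference list
and `u` appears (strictly) earlier. -/
def Prefers (M : SwapModel N) (i u v : Fin N) : Prop :=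
  ∃ k l : ℕ, k < l ∧ (M.pref i)[k]? = some u ∧ (M.pref i)[l]? = some v

/-- An assignment: a bijection mapping every agent to an object on her list. -/
def IsAssignment (M : SwapModel N) (σ : Fin N → Fin N) : Prop :=
  Function.Bijective σ ∧ ∀ i, σ i ∈ M.pref i

/-- `(σ 0, σ 1, …, σ t)` is a sequence of swaps: each next assignment arises from
the previous one by performing a swap between two adjacent agents, each of whom
prefers the object of the other agent. -/
def IsSwapSeq (M : SwapModel N) (t : ℕ) (σ : ℕ → Fin N → Fin N) : Prop :=
  M.IsAssignment (σ 0) ∧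
    ∀ k, k < t → ∃ i j : Fin N, M.G.Adj i j ∧
      M.Prefers i (σ k j) (σ k i) ∧ M.Prefers j (σ k i) (σ k j) ∧
      σ (k + 1) = σ k ∘ Equiv.swap i j

end SwapModel

/-- A swap: agent `a1` gives object `o1` to agent `a2` and receives object `o2`;
this records the swap `τ = {{a1, o1}, {a2, o2}}`. -/
structure Swap (N : ℕ) where
  a1 : Fin N
  o1 : Fin N
  a2 : Fin N
  o2 : Fin N

namespace SwapModel

variable {N : ℕ}

/-- The assignment `σ` admits the swap `τ`. -/
def Admitted (M : SwapModel N) (σ : Fin N → Fin N) (τ : Swap N) : Prop :=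
  σ τ.a1 = τ.o1 ∧ σ τ.a2 = τ.o2 ∧ M.G.Adj τ.a1 τ.a2 ∧
    M.Prefers τ.a1 τ.o2 τ.o1 ∧ M.Prefers τ.a2 τ.o1 τ.o2

/-- The assignment obtained from `σ` by performing the swap `τ`. -/
def applySwap (σ : Fin N → Fin N) (τ : Swap N) : Fin N → Fin N :=
  σ ∘ Equiv.swap τ.a1 τ.a2

/-- The assignment obtained from `σ` by performing a sequence of swaps. -/
def applySeq (σ : Fin N → Fin N) : List (Swap N) → (Fin N → Fin N)
  | [] => σ
  | τ :: φ => applySeq (applySwap σ τ) φ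

/-- `φ` is a valid swap sequence for the start assignment `σ`. -/
def ValidSeq (M : SwapModel N) (σ : Fin N → Fin N) : List (Swap N) → Prop
  | [] => True
  | τ :: φ => M.Admitted σ τ ∧ M.ValidSeq (applySwap σ τ) φ

/-- Object `x` is reachable for agent `I` from the initial assignment `σ0`. -/
def Reachable (M : SwapModel N) (σ0 : Fin N → Fin N) (I x : Fin N) : Prop :=
  ∃ φ : List (Swap N), M.ValidSeq σ0 φ ∧ applySeq σ0 φ I = x

end SwapModel

/-- The path graph on `N` agents: agents `i` and `i+1` are adjacent. -/
def pathGraph' (N : ℕ) : SimpleGraph (Fin N) where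
  Adj i j := i.val + 1 = j.val ∨ j.val + 1 = i.val
  symm := by constructor; intro i j h; exact h.symm
  loopless := by constructor; intro i h; rcases h with h | h <;> omega

/-- Swap `τ` exchanges the objects `u` and `v`. -/
def Swap.exchanges {N : ℕ} (τ : Swap N) (u v : Fin N) : Prop :=
  (τ.o1 = u ∧ τ.o2 = v) ∨ (τ.o1 = v ∧ τ.o2 = u)

/-- Swap `τ` takes place over the edge `{j, j+1}` of the path
(agents here being indexed by their `Fin` value). -/
def Swap.onEdge {N : ℕ} (τ : Swap N) (j : ℕ) : Prop :=
  (τ.a1.val = j ∧ τ.a2.val = j + 1) ∨ (τ.a2.val = j ∧ τ.a1.val = j + 1)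

namespace Swap

variable {N : ℕ}

def MovesRight (τ : Swap N) (u : Fin N) : Prop :=
  (τ.o1 = u → τ.a1 < τ.a2) ∧ (τ.o2 = u → τ.a2 < τ.a1)

theorem MovesRight.not_exchanges {τ : Swap N} {u v : Fin N} (hu : τ.MovesRight u)
    (hv : τ.MovesRight v) : ¬ τ.exchanges u v := by
  rintro (⟨h1, h2⟩ | ⟨h1, h2⟩)
  · exact (hu.1 h1).asymm (hv.2 h2)
  · exact (hv.1 h1).asymm (hu.2 h2)

end Swap

namespace SwapModel

variable {N : ℕ}

def HeldBefore (σ : Fin N → Fin N) (u v : Fin N) : Prop :=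
  ∀ a b, σ a = u → σ b = v → a < b

theorem heldBefore_of_injective {σ : Fin N → Fin N} (hσ : Function.Injective σ)
    {a b : Fin N} (hab : a < b) : HeldBefore σ (σ a) (σ b) :=
  fun _ _ ha hb => hσ ha ▸ hσ hb ▸ hab

theorem HeldBefore.comp_swap {σ : Fin N → Fin N} {u v i j : Fin N}
    (hij : (pathGraph' N).Adj i j)
    (hui : σ i = u → i < j) (huj : σ j = u → j < i)
    (hvi : σ i = v → i < j) (hvj : σ j = v → j < i)
    (h : HeldBefore σ u v) : HeldBefore (σ ∘ Equiv.swap i j) u v := by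
  intro a b ha hb
  have hlt := h _ _ ha hb
  simp only [Function.comp_apply, Equiv.swap_apply_def] at ha hb hlt
  simp only [pathGraph', Fin.lt_def, Fin.ext_iff] at *
  split_ifs at ha hb hlt <;> grind

theorem HeldBefore.applySwap {M : SwapModel N} (hG : M.G ≤ pathGraph' N)
    {σ : Fin N → Fin N} {τ : Swap N} (hτ : M.Admitted σ τ) {u v : Fin N}
    (hu : τ.MovesRight u) (hv : τ.MovesRight v) (h : HeldBefore σ u v) :
    HeldBefore (applySwap σ τ) u v := by
  obtain ⟨h1, h2, hadj, -, -⟩ := hτ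
  exact h.comp_swap (hG hadj) (fun e => hu.1 (h1.symm.trans e)) (fun e => hu.2 (h2.symm.trans e))
    (fun e => hv.1 (h1.symm.trans e)) (fun e => hv.2 (h2.symm.trans e))

theorem HeldBefore.applySeq {M : SwapModel N} (hG : M.G ≤ pathGraph' N) {u v : Fin N}
    {σ : Fin N → Fin N} {φ : List (Swap N)} (hφ : M.ValidSeq σ φ)
    (hu : ∀ τ ∈ φ, τ.MovesRight u) (hv : ∀ τ ∈ φ, τ.MovesRight v)
    (h : HeldBefore σ u v) : HeldBefore (SwapModel.applySeq σ φ) u v := by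
  induction φ generalizing σ with
  | nil => exact h
  | cons τ φ ih =>
    simp only [List.forall_mem_cons] at hu hv
    exact ih hφ.2 hu.2 hv.2 (h.applySwap hG hφ.1 hu.1 hv.1)

theorem ValidSeq.take {M : SwapModel N} {σ : Fin N → Fin N} {φ : List (Swap N)}
    (hφ : M.ValidSeq σ φ) (k : ℕ) : M.ValidSeq σ (φ.take k) := by
  induction φ generalizing σ k with
  | nil => simp only [List.take_nil]; trivial
  | cons τ φ ih =>
    cases k with
    | zero => trivial
    | succ k => exact ⟨hφ.1, ih hφ.2 k⟩

end SwapModel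

theorem statement9_general (N : ℕ) (M : SwapModel (N + 1)) (hG : M.G = pathGraph' (N + 1))
    (σ0 : Fin (N + 1) → Fin (N + 1)) (hσ0 : M.IsAssignment σ0)
    (φ : List (Swap (N + 1))) (hvalid : M.ValidSeq σ0 φ)
    (w y : Fin (N + 1))
    (hw : ∀ τ ∈ φ, (τ.o1 = w → τ.a1.val < τ.a2.val) ∧ (τ.o2 = w → τ.a2.val < τ.a1.val))
    (hy : ∀ τ ∈ φ, (τ.o1 = y → τ.a1.val < τ.a2.val) ∧ (τ.o2 = y → τ.a2.val < τ.a1.val)) :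
    (¬ ∃ τ ∈ φ, τ.exchanges w y) ∧
    (∀ aw ay : Fin (N + 1), σ0 aw = w → σ0 ay = y → aw < ay →
      ∀ k, k ≤ φ.length → ∀ a b : Fin (N + 1),
        SwapModel.applySeq σ0 (φ.take k) a = w →
        SwapModel.applySeq σ0 (φ.take k) b = y → a < b) := by
  refine ⟨fun ⟨τ, hτ, hex⟩ =>
    Swap.MovesRight.not_exchanges (hw τ hτ) (hy τ hτ) hex, ?_⟩
  rintro aw ay rfl rfl hlt k - a b ha hb
  have hprefix {u} (hu : ∀ τ ∈ φ, τ.MovesRight u) : ∀ τ ∈ φ.take k, τ.MovesRight u :=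
    fun τ hτ => hu τ (List.mem_of_mem_take hτ)
  exact (SwapModel.heldBefore_of_injective hσ0.1.injective hlt).applySeq hG.le
    (hvalid.take k) (hprefix hw) (hprefix hy) a b ha hb

/-- The underlying graph is the path on agents `0, 1, …, N`.
If in a sequence of swaps two distinct objects `w` and `y` are each only moved to the
right (every swap involving them transfers them to a higher-indexed agent), then `w`
and `y` are never swapped with each other, and their relative order is preserved: in
every assignment of the sequence, the one of `w, y` that was initially held by the
lower-indexed agent is still held by a lower-indexed agent than the other. -/
theorem statement9 (N : ℕ) (M : SwapModel (N + 1)) (hG : M.G = pathGraph' (N + 1))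
    (σ0 : Fin (N + 1) → Fin (N + 1)) (hσ0 : M.IsAssignment σ0)
    (φ : List (Swap (N + 1))) (hvalid : M.ValidSeq σ0 φ)
    (w y : Fin (N + 1)) (hwy : w ≠ y)
    (hw : ∀ τ ∈ φ, (τ.o1 = w → τ.a1.val < τ.a2.val) ∧ (τ.o2 = w → τ.a2.val < τ.a1.val))
    (hy : ∀ τ ∈ φ, (τ.o1 = y → τ.a1.val < τ.a2.val) ∧ (τ.o2 = y → τ.a2.val < τ.a1.val)) :
    (¬ ∃ τ ∈ φ, τ.exchanges w y) ∧
    (∀ aw ay : Fin (N + 1), σ0 aw = w → σ0 ay = y → aw < ay →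
      ∀ k, k ≤ φ.length → ∀ a b : Fin (N + 1),
        SwapModel.applySeq σ0 (φ.take k) a = w →
        SwapModel.applySeq σ0 (φ.take k) b = y → a < b) :=
  statement9_general N M hG σ0 hσ0 φ hvalid w y hw hy
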